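/- arXiv:2402.17578 — 3 statements merged into one kernel-verified Lean document; each statement's English description precedes it below -/
import Mathlib

section
/- Let E ⊂ ℝ^{2N} be measurable and ε > 0. If there exist nonzero f, g ∈ L²(ℝᴺ) such that ∫_E |V_g f(x,ξ)|² dx dξ ≥ (1−ε) ‖f‖₂² ‖g‖₂², then the Lebesgue measure of E satisfies m(E) ≥ 1 − ε. -/
/-! By Cauchy–Schwarz and translation invariance of Lebesgue measure, `‖V_g f‖_∞ ≤ ‖f‖₂ ‖g‖₂`.
Hence `∫_E |V_g f|² ≤ m(E) ‖f‖₂² ‖g‖₂²`, and comparing with the hypothesis gives `1 - ε ≤ m(E)`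
once `‖f‖₂ ‖g‖₂ ≠ 0`. -/

open MeasureTheory Complex ENNReal

noncomputable section

abbrev RN (N : ℕ) := Fin N → ℝ

def dotR {N : ℕ} (x y : RN N) : ℝ := ∑ i, x i * y i

def stft {N : ℕ} (g f : RN N → ℂ) (x ξ : RN N) : ℂ :=
  ∫ y, f y * (starRingEnd ℂ) (g (y - x)) * Complex.exp (-(Complex.I * (dotR y ξ : ℂ)))

def ftr {N : ℕ} (f : RN N → ℂ) (ξ : RN N) : ℂ :=
  ∫ x, Complex.exp (-(Complex.I * (dotR x ξ : ℂ))) * f x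

def rihaczek {N : ℕ} (f : RN N → ℂ) (x ξ : RN N) : ℂ :=
  Complex.exp (-(Complex.I * (dotR x ξ : ℂ))) * f x * (starRingEnd ℂ) (ftr f ξ)

def spec {N : ℕ} (g f : RN N → ℂ) (x ξ : RN N) : ℝ := ‖stft g f x ξ‖ ^ 2

def wig {N : ℕ} (τ : ℝ) (f : RN N → ℂ) (x ξ : RN N) : ℂ :=
  ∫ t, Complex.exp (-(Complex.I * (dotR t ξ : ℂ))) * f (x + τ • t) *
    (starRingEnd ℂ) (f (x - (1 - τ) • t))

structure WeightFunction where
  w : ℝ → ℝ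
  K : ℝ
  a : ℝ
  b : ℝ
  oneLeK : 1 ≤ K
  bpos : 0 < b
  cont : Continuous w
  mono : MonotoneOn w (Set.Ici 0)
  nonneg : ∀ t, 0 ≤ w t
  alpha : ∀ t, 0 ≤ t → w (2 * t) ≤ K * (1 + w t)
  beta : Filter.Tendsto (fun t => w t / t) Filter.atTop (nhds 0)
  gamma : ∀ t, 0 ≤ t → a + b * Real.log (1 + t) ≤ w t
  delta : ConvexOn ℝ Set.univ (fun t => w (Real.exp t))
  subadd : ∀ s t, 0 ≤ s → 0 ≤ t → w (s + t) ≤ K * (1 + w s + w t)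

def wnorm (W : WeightFunction) (lam : ℝ) {E : Type*} [NormedAddCommGroup E]
    [MeasurableSpace E] (μ : Measure E) {F : Type*} [NormedAddCommGroup F]
    (f : E → F) (p : ℝ≥0∞) : ℝ≥0∞ :=
  eLpNorm (fun t => Real.exp (lam * W.w ‖t‖) * ‖f t‖) p μ

def SOmega {N : ℕ} (W : WeightFunction) (f : RN N → ℂ) : Prop :=
  ∀ lam : ℝ, 0 < lam →
    (∃ C, ∀ x, Real.exp (lam * W.w ‖x‖) * ‖f x‖ ≤ C) ∧
    (∃ C, ∀ ξ, Real.exp (lam * W.w ‖ξ‖) * ‖ftr f ξ‖ ≤ C)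

def elpN {α : Type*} [MeasurableSpace α] (μ : Measure α) (h : α → ℝ≥0∞) (p : ℝ≥0∞) : ℝ≥0∞ :=
  if p = ∞ then essSup h μ else (∫⁻ z, (h z) ^ p.toReal ∂μ) ^ (1 / p.toReal)

end

theorem enorm_stft_le {N : ℕ} {f g : RN N → ℂ} (hf : AEStronglyMeasurable f volume)
    (hg : AEStronglyMeasurable g volume) (x ξ : RN N) :
    ‖stft g f x ξ‖ₑ ≤ eLpNorm f 2 volume * eLpNorm g 2 volume := by
  have hg_shift : AEStronglyMeasurable (fun y => starRingEnd ℂ (g (y - x))) volume :=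
    (hg.comp_measurePreserving (measurePreserving_sub_right volume x)).star
  calc ‖stft g f x ξ‖ₑ
      ≤ ∫⁻ y, ‖f y * starRingEnd ℂ (g (y - x)) * exp (-(I * (dotR y ξ : ℂ)))‖ₑ :=
        enorm_integral_le_lintegral_enorm _
    _ = eLpNorm (fun y => f y * starRingEnd ℂ (g (y - x))) 1 volume := by
        simp [eLpNorm_one_eq_lintegral_enorm, ← ofReal_norm, Complex.norm_exp]
    _ ≤ 1 * eLpNorm f 2 volume * eLpNorm (fun y => starRingEnd ℂ (g (y - x))) 2 volume :=
        eLpNorm_le_eLpNorm_mul_eLpNorm'_of_norm hf hg_shift (· * ·) 1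
          (.of_forall fun _ => by simp)
    _ = eLpNorm f 2 volume * eLpNorm g 2 volume := by
        rw [one_mul, ← eLpNorm_comp_measurePreserving hg (measurePreserving_sub_right volume x),
          ← eLpNorm_conj (g ∘ _)]
        rfl

theorem norm_stft_le {N : ℕ} {f g : RN N → ℂ} (hf : MemLp f 2 volume) (hg : MemLp g 2 volume)
    (x ξ : RN N) :
    ‖stft g f x ξ‖ ≤ (eLpNorm f 2 volume).toReal * (eLpNorm g 2 volume).toReal := by
  rw [← ENNReal.toReal_mul, ← toReal_enorm]
  exact ENNReal.toReal_mono (ENNReal.mul_ne_top hf.eLpNorm_ne_top hg.eLpNorm_ne_top)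
    (enorm_stft_le hf.1 hg.1 x ξ)

theorem stmt1_general {N : ℕ} (E : Set (RN N × RN N))
    (ε : ℝ) (f g : RN N → ℂ)
    (hf : MeasureTheory.MemLp f 2 MeasureTheory.volume)
    (hg : MeasureTheory.MemLp g 2 MeasureTheory.volume)
    (hf0 : MeasureTheory.eLpNorm f 2 MeasureTheory.volume ≠ 0)
    (hg0 : MeasureTheory.eLpNorm g 2 MeasureTheory.volume ≠ 0)
    (h : (1 - ε) * (MeasureTheory.eLpNorm f 2 MeasureTheory.volume).toReal ^ 2 *
        (MeasureTheory.eLpNorm g 2 MeasureTheory.volume).toReal ^ 2 ≤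
      ∫ z in E, ‖stft g f z.1 z.2‖ ^ 2) :
    ENNReal.ofReal (1 - ε) ≤ MeasureTheory.volume E := by
  set M := (eLpNorm f 2 volume).toReal * (eLpNorm g 2 volume).toReal
  have hM : 0 < M := mul_pos (ENNReal.toReal_pos hf0 hf.eLpNorm_ne_top)
    (ENNReal.toReal_pos hg0 hg.eLpNorm_ne_top)
  obtain hE_top | hE_fin := eq_top_or_lt_top (volume E)
  · simp [hE_top]
  have h_upper : ∫ z in E, ‖stft g f z.1 z.2‖ ^ 2 ≤ M ^ 2 * volume.real E := by
    refine (Real.le_norm_self _).trans ?_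
    refine norm_setIntegral_le_of_norm_le_const hE_fin fun z _ => ?_
    rw [norm_pow, norm_norm]
    exact pow_le_pow_left₀ (norm_nonneg _) (norm_stft_le hf hg z.1 z.2) 2
  refine ENNReal.ofReal_le_of_le_toReal (le_of_mul_le_mul_left ?_ (pow_pos hM 2))
  calc M ^ 2 * (1 - ε) = (1 - ε) * (eLpNorm f 2 volume).toReal ^ 2 *
        (eLpNorm g 2 volume).toReal ^ 2 := by ring
    _ ≤ M ^ 2 * volume.real E := h.trans h_upper

theorem stmt1 {N : ℕ} (E : Set (RN N × RN N)) (hE : MeasurableSet E)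
    (ε : ℝ) (hε : 0 < ε) (f g : RN N → ℂ)
    (hf : MeasureTheory.MemLp f 2 MeasureTheory.volume)
    (hg : MeasureTheory.MemLp g 2 MeasureTheory.volume)
    (hf0 : MeasureTheory.eLpNorm f 2 MeasureTheory.volume ≠ 0)
    (hg0 : MeasureTheory.eLpNorm g 2 MeasureTheory.volume ≠ 0)
    (h : (1 - ε) * (MeasureTheory.eLpNorm f 2 MeasureTheory.volume).toReal ^ 2 *
        (MeasureTheory.eLpNorm g 2 MeasureTheory.volume).toReal ^ 2 ≤
      ∫ z in E, ‖stft g f z.1 z.2‖ ^ 2) :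
    ENNReal.ofReal (1 - ε) ≤ MeasureTheory.volume E :=
  stmt1_general E ε f g hf hg hf0 hg0 h
end

section
/- Let ω be a weight function with constant K from condition (α), and let g ∈ 𝒮_ω(ℝᴺ), g ≠ 0. Then for every λ ≥ 0, 1 ≤ p ≤ ∞, and f ∈ 𝒮_ω(ℝᴺ): ‖e^{λω} Sp_g f‖_∞ ≤ (2π)^{−N} e^{K(1+2K)λ} ‖e^{2K²λω} Rf‖_p ‖e^{2K²λω} Rg‖_{p'}. -/
open MeasureTheory Complex ENNReal

/-!
Splitting the phase of the Rihaczek distributions, Fubini and the Parseval formula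
`∫ conj (f̂) φ̂ = (2π)^N ∫ conj f φ` (applied to a modulated translate `φ` of `g`) give the identity
`∫ Rf(w) conj (Rg(w - z)) dw = (2π)^N |V_g f(z)|²`.
Quasi-subadditivity of the weight, `ω(z) ≤ K (1 + ω(w) + ω(w - z))`, moves `e^{λω(z)}` onto the two
factors of the integrand, and Hölder's inequality together with the translation invariance of
Lebesgue measure bounds the integral by the weighted `L^p` and `L^{p'}` norms.
-/

open ComplexConjugate FourierTransform

section Fourier

variable {N : ℕ}

lemma dotR_eq_dotProduct (x y : RN N) : dotR x y = x ⬝ᵥ y := rfl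

lemma continuous_dotR : Continuous fun p : RN N × RN N => dotR p.1 p.2 :=
  continuous_fst.dotProduct continuous_snd

lemma integral_comp_ofLp (φ : RN N → ℂ) :
    ∫ x : EuclideanSpace ℝ (Fin N), φ x.ofLp = ∫ y, φ y :=
  (PiLp.volume_preserving_ofLp (Fin N)).integral_comp
    (MeasurableEquiv.toLp 2 _).symm.measurableEmbedding φ

lemma inner_toLp_eq_dotR (x : EuclideanSpace ℝ (Fin N)) (v : RN N) :
    inner ℝ x (WithLp.toLp 2 v) = dotR x.ofLp v := by
  rw [EuclideanSpace.inner_eq_star_dotProduct, star_trivial, dotR_eq_dotProduct, dotProduct_comm]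

/-- Mathlib's Fourier transform lives on inner product spaces, and `RN N` carries the sup norm. -/
noncomputable def SchwartzMap.toEuclidean (f : SchwartzMap (RN N) ℂ) :
    SchwartzMap (EuclideanSpace ℝ (Fin N)) ℂ :=
  SchwartzMap.compCLMOfContinuousLinearEquiv ℝ (EuclideanSpace.equiv (Fin N) ℝ) f

lemma SchwartzMap.toEuclidean_apply (f : SchwartzMap (RN N) ℂ) (x : EuclideanSpace ℝ (Fin N)) :
    f.toEuclidean x = f x.ofLp := rfl

lemma ftr_eq_fourier (f : SchwartzMap (RN N) ℂ) (ζ : RN N) :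
    ftr f ζ = 𝓕 (⇑f.toEuclidean) ((2 * Real.pi)⁻¹ • WithLp.toLp 2 ζ) := by
  rw [Real.fourier_eq', ftr, ← integral_comp_ofLp]
  congr 1 with x
  rw [smul_eq_mul, real_inner_smul_right, inner_toLp_eq_dotR, f.toEuclidean_apply]
  congr 2
  have : (Real.pi : ℂ) ≠ 0 := by exact_mod_cast Real.pi_ne_zero
  push_cast
  field_simp

lemma ftr_eq_fourier_comp (f : SchwartzMap (RN N) ℂ) :
    ftr f = (fun u => 𝓕 (⇑f.toEuclidean) ((2 * Real.pi)⁻¹ • u)) ∘ WithLp.toLp 2 :=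
  funext (ftr_eq_fourier f)

lemma integrable_ftr (f : SchwartzMap (RN N) ℂ) : Integrable (ftr f) := by
  rw [ftr_eq_fourier_comp, (PiLp.volume_preserving_toLp (Fin N)).integrable_comp_emb
    (MeasurableEquiv.toLp 2 _).measurableEmbedding,
    integrable_comp_smul_iff volume _ (by positivity)]
  exact (𝓕 f.toEuclidean).integrable

lemma continuous_ftr (f : SchwartzMap (RN N) ℂ) : Continuous (ftr f) := by
  rw [ftr_eq_fourier_comp]
  exact ((𝓕 f.toEuclidean).continuous.comp (continuous_const_smul _)).comp
    (PiLp.continuous_toLp 2 _)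

lemma integral_ftr_mul_exp (f : SchwartzMap (RN N) ℂ) (v : RN N) :
    ∫ η, ftr f η * cexp (I * (dotR v η : ℂ)) =
      (((2 * Real.pi) ^ N : ℝ) : ℂ) * f v := by
  set F := f.toEuclidean
  set G : EuclideanSpace ℝ (Fin N) → ℂ :=
    fun u => cexp (↑(2 * Real.pi * inner ℝ u (WithLp.toLp 2 v)) * I) • 𝓕 ⇑F u
  have hscale : ∀ x : EuclideanSpace ℝ (Fin N),
      ftr f x.ofLp * cexp (I * (dotR v x.ofLp : ℂ)) = G ((2 * Real.pi)⁻¹ • x) := by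
    intro x
    rw [ftr_eq_fourier, WithLp.toLp_ofLp]
    simp only [G, smul_eq_mul]
    rw [mul_comm, real_inner_smul_left, inner_toLp_eq_dotR, dotR_eq_dotProduct,
      dotR_eq_dotProduct, dotProduct_comm]
    congr 2
    have : (Real.pi : ℂ) ≠ 0 := by exact_mod_cast Real.pi_ne_zero
    push_cast
    field_simp
  rw [← integral_comp_ofLp]
  simp_rw [hscale]
  rw [Measure.integral_comp_smul volume G, ← Real.fourierInv_eq',
    F.continuous.fourierInv_fourier_eq F.integrable (𝓕 F).integrable, finrank_euclideanSpace_fin,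
    inv_pow, inv_inv, abs_of_pos (by positivity), f.toEuclidean_apply, real_smul]

end Fourier

section Rihaczek

variable {N : ℕ}

lemma conj_exp_I_mul (r : ℝ) :
    conj (cexp (I * r)) = cexp (-(I * r)) := by
  rw [← Complex.exp_conj]; simp

lemma integral_conj_ftr_mul_ftr (f : SchwartzMap (RN N) ℂ) {φ : RN N → ℂ} (hφ : Integrable φ) :
    ∫ η, conj (ftr f η) * ftr φ η =
      (((2 * Real.pi) ^ N : ℝ) : ℂ) * ∫ v, conj (f v) * φ v := by
  have hint : Integrable (Function.uncurry fun η v =>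
      conj (ftr f η) * (cexp (-(I * (dotR v η : ℂ))) * φ v))
      (volume.prod volume) := by
    refine ((integrable_ftr f).norm.mul_prod hφ.norm).mono' ?_ (.of_forall fun ⟨η, v⟩ => ?_)
    · refine ((continuous_ftr f).comp continuous_fst).star.aestronglyMeasurable.mul
        (Continuous.aestronglyMeasurable ?_ |>.mul hφ.aestronglyMeasurable.comp_snd)
      exact Complex.continuous_exp.comp (continuous_const.mul
        (Complex.continuous_ofReal.comp (continuous_dotR.comp continuous_swap))).neg
    · simp [Complex.norm_exp]
  calc ∫ η, conj (ftr f η) * ftr φ η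
      = ∫ η, ∫ v, conj (ftr f η) * (cexp (-(I * (dotR v η : ℂ))) * φ v) := by
        simp_rw [ftr, integral_const_mul]
    _ = ∫ v, ∫ η, conj (ftr f η) * (cexp (-(I * (dotR v η : ℂ))) * φ v) :=
        integral_integral_swap hint
    _ = ∫ v, conj (∫ η, ftr f η * cexp (I * (dotR v η : ℂ))) * φ v := by
        congr with v
        rw [← integral_conj, ← integral_mul_const]
        congr with η
        rw [map_mul, conj_exp_I_mul]
        ring
    _ = _ := by
        simp_rw [integral_ftr_mul_exp, map_mul, Complex.conj_ofReal, mul_assoc,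
          integral_const_mul]

lemma ftr_exp_mul_comp_sub (g : RN N → ℂ) (x ξ η : RN N) :
    ftr (fun v => cexp (I * (dotR v ξ : ℂ)) * g (v - x)) η =
      cexp (-(I * (dotR x (η - ξ) : ℂ))) * ftr g (η - ξ) := by
  rw [ftr, ftr, ← integral_const_mul, ← integral_add_right_eq_self _ x]
  congr with u
  simp only [add_sub_cancel_right, ← mul_assoc, ← Complex.exp_add]
  congr 2
  simp only [dotR_eq_dotProduct, add_dotProduct, dotProduct_sub]
  push_cast
  ring

lemma rihaczek_mul_conj_rihaczek_sub (f g : RN N → ℂ) (u η x ξ : RN N) :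
    rihaczek f u η * conj (rihaczek g (u - x) (η - ξ)) =
      (f u * conj (g (u - x)) * cexp (-(I * (dotR u ξ : ℂ)))) *
        (conj (ftr f η) * ftr (fun v => cexp (I * (dotR v ξ : ℂ)) * g (v - x)) η) := by
  have hphase : cexp (-(I * (dotR u η : ℂ))) *
      cexp (I * (dotR (u - x) (η - ξ) : ℂ)) =
        cexp (-(I * (dotR u ξ : ℂ))) *
          cexp (-(I * (dotR x (η - ξ) : ℂ))) := by
    simp only [← Complex.exp_add, dotR_eq_dotProduct, sub_dotProduct, dotProduct_sub]
    congr 1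
    push_cast
    ring
  rw [ftr_exp_mul_comp_sub, rihaczek, rihaczek, map_mul, map_mul, Complex.conj_conj,
    ← Complex.exp_conj]
  simp only [map_neg, map_mul, Complex.conj_I, Complex.conj_ofReal, neg_mul, neg_neg]
  linear_combination (f u * conj (g (u - x)) * conj (ftr f η) * ftr g (η - ξ)) * hphase

lemma integral_rihaczek_mul_conj_rihaczek_sub (f g : SchwartzMap (RN N) ℂ) (z : RN N × RN N) :
    ∫ w : RN N × RN N, rihaczek f w.1 w.2 * conj (rihaczek g (w - z).1 (w - z).2) =
      (((2 * Real.pi) ^ N * spec g f z.1 z.2 : ℝ) : ℂ) := by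
  obtain ⟨x, ξ⟩ := z
  set φ : RN N → ℂ := fun v => cexp (I * (dotR v ξ : ℂ)) * g (v - x)
  have hφ : Integrable φ :=
    (g.integrable.comp_sub_right x).bdd_mul (c := 1)
      (Complex.continuous_exp.comp (continuous_const.mul (Complex.continuous_ofReal.comp
        (continuous_dotR.comp (continuous_id.prodMk continuous_const))))).aestronglyMeasurable
      (.of_forall fun v => by simp [Complex.norm_exp])
  have hconj : ∫ v, conj (f v) * φ v = conj (stft g f x ξ) := by
    rw [stft, ← integral_conj]
    congr with v
    rw [map_mul, map_mul, Complex.conj_conj, ← conj_exp_I_mul, Complex.conj_conj]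
    ring
  simp only [Prod.fst_sub, Prod.snd_sub, rihaczek_mul_conj_rihaczek_sub]
  rw [Measure.volume_eq_prod, integral_prod_mul
    (fun u => f u * conj (g (u - x)) * cexp (-(I * (dotR u ξ : ℂ))))
    (fun η => conj (ftr f η) * ftr φ η), integral_conj_ftr_mul_ftr f hφ, hconj, ← stft,
    spec, mul_left_comm, Complex.mul_conj, Complex.normSq_eq_norm_sq]
  push_cast
  ring

lemma continuous_rihaczek (f : SchwartzMap (RN N) ℂ) :
    Continuous fun z : RN N × RN N => rihaczek f z.1 z.2 :=
  ((Complex.continuous_exp.comp (continuous_const.mul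
    (Complex.continuous_ofReal.comp continuous_dotR)).neg).mul
      (f.continuous.comp continuous_fst)).mul
    ((continuous_ftr f).comp continuous_snd).star

end Rihaczek

lemma lintegral_enorm_mul_comp_sub_le {G : Type*} [AddGroup G] [MeasurableSpace G]
    [MeasurableAdd G] {μ : Measure G} [μ.IsAddRightInvariant] {p q : ℝ≥0∞}
    [p.HolderConjugate q] {φ ψ : G → ℝ} (hφ : AEStronglyMeasurable φ μ)
    (hψ : AEStronglyMeasurable ψ μ) (z : G) :
    ∫⁻ w, ‖φ w‖ₑ * ‖ψ (w - z)‖ₑ ∂μ ≤ eLpNorm φ p μ * eLpNorm ψ q μ := by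
  have hshift := measurePreserving_sub_right μ z
  calc ∫⁻ w, ‖φ w‖ₑ * ‖ψ (w - z)‖ₑ ∂μ = eLpNorm (φ • (ψ ∘ (· - z))) 1 μ := by
        simp [eLpNorm_one_eq_lintegral_enorm, enorm_mul]
    _ ≤ eLpNorm φ p μ * eLpNorm (ψ ∘ (· - z)) q μ :=
        eLpNorm_smul_le_mul_eLpNorm (hψ.comp_measurePreserving hshift) hφ
    _ = eLpNorm φ p μ * eLpNorm ψ q μ := by rw [eLpNorm_comp_measurePreserving hψ hshift]

namespace WeightFunction

variable (W : WeightFunction) {E : Type*}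

lemma w_norm_le [SeminormedAddCommGroup E] (z w : E) :
    W.w ‖z‖ ≤ W.K * (1 + W.w ‖w‖ + W.w ‖w - z‖) := by
  have htri : ‖z‖ ≤ ‖w‖ + ‖w - z‖ := by simpa using norm_sub_le w (w - z)
  calc W.w ‖z‖ ≤ W.w (‖w‖ + ‖w - z‖) :=
        W.mono (norm_nonneg z) (add_nonneg (norm_nonneg _) (norm_nonneg _)) htri
    _ ≤ _ := W.subadd _ _ (norm_nonneg _) (norm_nonneg _)

lemma mul_w_norm_le [SeminormedAddCommGroup E] {lam : ℝ} (hlam : 0 ≤ lam) (z w : E) :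
    lam * W.w ‖z‖ ≤ W.K * (1 + 2 * W.K) * lam + 2 * W.K ^ 2 * lam * W.w ‖w‖ +
      2 * W.K ^ 2 * lam * W.w ‖w - z‖ := by
  have hK : 0 ≤ 2 * W.K ^ 2 - W.K := by nlinarith [W.oneLeK]
  have hw := mul_nonneg hlam (W.nonneg ‖w‖)
  have hwz := mul_nonneg hlam (W.nonneg ‖w - z‖)
  nlinarith [mul_le_mul_of_nonneg_left (W.w_norm_le z w) hlam, mul_nonneg hK hw,
    mul_nonneg hK hwz, mul_nonneg (sq_nonneg W.K) hlam]

lemma exp_mul_enorm_integral_mul_conj_sub_le {lam : ℝ} (hlam : 0 ≤ lam)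
    [NormedAddCommGroup E] [MeasurableSpace E]
    [OpensMeasurableSpace E] [MeasurableAdd E] {μ : Measure E} [μ.IsAddRightInvariant]
    {p q : ℝ≥0∞} [p.HolderConjugate q] {F G : E → ℂ} (hF : AEStronglyMeasurable F μ)
    (hG : AEStronglyMeasurable G μ) (z : E) :
    ENNReal.ofReal (Real.exp (lam * W.w ‖z‖)) * ‖∫ w, F w * conj (G (w - z)) ∂μ‖ₑ ≤
      ENNReal.ofReal (Real.exp (W.K * (1 + 2 * W.K) * lam)) *
        (wnorm W (2 * W.K ^ 2 * lam) μ F p * wnorm W (2 * W.K ^ 2 * lam) μ G q) := by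
  set c := 2 * W.K ^ 2 * lam
  set C := Real.exp (W.K * (1 + 2 * W.K) * lam)
  have hweight : Continuous fun t : E => Real.exp (c * W.w ‖t‖) :=
    Real.continuous_exp.comp (continuous_const.mul (W.cont.comp continuous_norm))
  have hpoint : ∀ w, ENNReal.ofReal (Real.exp (lam * W.w ‖z‖)) * ‖F w * conj (G (w - z))‖ₑ ≤
      ENNReal.ofReal C * (‖Real.exp (c * W.w ‖w‖) * ‖F w‖‖ₑ *
        ‖Real.exp (c * W.w ‖w - z‖) * ‖G (w - z)‖‖ₑ) := by
    intro w
    rw [← ofReal_norm, norm_mul, RCLike.norm_conj, Real.enorm_eq_ofReal (by positivity),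
      Real.enorm_eq_ofReal (by positivity), ← ENNReal.ofReal_mul (by positivity),
      ← ENNReal.ofReal_mul (by positivity), ← ENNReal.ofReal_mul (by positivity)]
    refine ENNReal.ofReal_le_ofReal ?_
    have hexp : Real.exp (lam * W.w ‖z‖) ≤
        C * (Real.exp (c * W.w ‖w‖) * Real.exp (c * W.w ‖w - z‖)) := by
      rw [← Real.exp_add, ← Real.exp_add, Real.exp_le_exp]
      linarith [W.mul_w_norm_le hlam z w]
    calc Real.exp (lam * W.w ‖z‖) * (‖F w‖ * ‖G (w - z)‖)
        ≤ C * (Real.exp (c * W.w ‖w‖) * Real.exp (c * W.w ‖w - z‖)) * (‖F w‖ * ‖G (w - z)‖) := by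
          gcongr
      _ = _ := by ring
  calc ENNReal.ofReal (Real.exp (lam * W.w ‖z‖)) * ‖∫ w, F w * conj (G (w - z)) ∂μ‖ₑ
      ≤ ENNReal.ofReal (Real.exp (lam * W.w ‖z‖)) * ∫⁻ w, ‖F w * conj (G (w - z))‖ₑ ∂μ := by
        gcongr; exact enorm_integral_le_lintegral_enorm _
    _ ≤ ∫⁻ w, ENNReal.ofReal C * (‖Real.exp (c * W.w ‖w‖) * ‖F w‖‖ₑ *
          ‖Real.exp (c * W.w ‖w - z‖) * ‖G (w - z)‖‖ₑ) ∂μ := by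
        rw [← lintegral_const_mul' _ _ ENNReal.ofReal_ne_top]
        exact lintegral_mono hpoint
    _ ≤ ENNReal.ofReal C * (wnorm W c μ F p * wnorm W c μ G q) := by
        rw [lintegral_const_mul' _ _ ENNReal.ofReal_ne_top]
        gcongr
        exact lintegral_enorm_mul_comp_sub_le (hweight.aestronglyMeasurable.mul hF.norm)
          (hweight.aestronglyMeasurable.mul hG.norm) z

end WeightFunction

theorem stmt5_general {N : ℕ} (W : WeightFunction) (g : SchwartzMap (RN N) ℂ)
    (lam : ℝ) (hlam : 0 ≤ lam) (p q : ℝ≥0∞) (hpq : 1 / p + 1 / q = 1)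
    (f : SchwartzMap (RN N) ℂ) :
    wnorm W lam MeasureTheory.volume (fun z : RN N × RN N => spec ⇑g ⇑f z.1 z.2) ⊤ ≤
      ENNReal.ofReal (((2 * Real.pi) ^ N)⁻¹ * Real.exp (W.K * (1 + 2 * W.K) * lam)) *
      wnorm W (2 * W.K ^ 2 * lam) MeasureTheory.volume
        (fun z : RN N × RN N => rihaczek ⇑f z.1 z.2) p *
      wnorm W (2 * W.K ^ 2 * lam) MeasureTheory.volume
        (fun z : RN N × RN N => rihaczek ⇑g z.1 z.2) q := by
  have : (volume : Measure (RN N × RN N)).IsAddRightInvariant := by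
    rw [Measure.volume_eq_prod]; infer_instance
  have : p.HolderConjugate q := ENNReal.holderConjugate_iff.2 (by simpa only [one_div] using hpq)
  rw [wnorm, eLpNorm_exponent_top, ENNReal.ofReal_mul (by positivity), mul_assoc, mul_assoc]
  refine eLpNormEssSup_le_of_ae_enorm_bound (.of_forall fun z => ?_)
  have hcorr := W.exp_mul_enorm_integral_mul_conj_sub_le hlam (μ := volume) (p := p) (q := q)
    (continuous_rihaczek f).aestronglyMeasurable (continuous_rihaczek g).aestronglyMeasurable z
  have hspec : 0 ≤ spec g f z.1 z.2 := by unfold spec; positivity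
  rw [integral_rihaczek_mul_conj_rihaczek_sub, ← ofReal_norm, Complex.norm_real,
    Real.norm_of_nonneg (by positivity)] at hcorr
  calc ‖Real.exp (lam * W.w ‖z‖) * ‖spec g f z.1 z.2‖‖ₑ
      = ENNReal.ofReal ((2 * Real.pi) ^ N)⁻¹ * (ENNReal.ofReal (Real.exp (lam * W.w ‖z‖)) *
          ENNReal.ofReal ((2 * Real.pi) ^ N * spec g f z.1 z.2)) := by
        rw [Real.norm_of_nonneg hspec, Real.enorm_eq_ofReal (by positivity),
          ← ENNReal.ofReal_mul (by positivity), ← ENNReal.ofReal_mul (by positivity)]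
        congr 1
        field_simp
    _ ≤ _ := by gcongr

theorem stmt5 {N : ℕ} (W : WeightFunction) (g : SchwartzMap (RN N) ℂ)
    (hg : SOmega W ⇑g) (hg0 : ⇑g ≠ 0)
    (lam : ℝ) (hlam : 0 ≤ lam) (p q : ℝ≥0∞) (hp : 1 ≤ p) (hpq : 1 / p + 1 / q = 1)
    (f : SchwartzMap (RN N) ℂ) (hf : SOmega W ⇑f) :
    wnorm W lam MeasureTheory.volume (fun z : RN N × RN N => spec ⇑g ⇑f z.1 z.2) ⊤ ≤
      ENNReal.ofReal (((2 * Real.pi) ^ N)⁻¹ * Real.exp (W.K * (1 + 2 * W.K) * lam)) *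
      wnorm W (2 * W.K ^ 2 * lam) MeasureTheory.volume
        (fun z : RN N × RN N => rihaczek ⇑f z.1 z.2) p *
      wnorm W (2 * W.K ^ 2 * lam) MeasureTheory.volume
        (fun z : RN N × RN N => rihaczek ⇑g z.1 z.2) q :=
  stmt5_general W g lam hlam p q hpq f
end

section
/- (Price local uncertainty principle) Let α > N/2 and E ⊂ ℝᴺ measurable. There is a constant K′ = K′(N,α) such that for every nonzero f ∈ L²(ℝᴺ) and t̄ ∈ ℝᴺ: ∫_E |f̂(ξ)|² dξ ≤ K′ m(E) ‖f‖₂^{2−N/α} ‖|t−t̄|^α f‖₂^{N/α}, with the Fourier transform normalized as f̂(ξ) = ∫ e^{−ix·ξ} f(x) dx and Plancherel ‖f̂‖₂² = (2π)^N ‖f‖₂² absorbed into K′. -/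
open MeasureTheory Complex ENNReal

/-!
The Fourier transform is bounded by `‖f‖₁`, so the left side is at most `m(E) ‖f‖₁²`, and it
remains to prove Price's inequality `‖f‖₁ ≤ C ‖f‖₂^{1-θ} ‖|t - t̄|^α f‖₂^θ` with `θ = n / (2α)`.
Split `‖f‖₁` at the closed ball of radius `r` about `t̄`. On the ball, Cauchy–Schwarz gives
`r^{n/2} ‖f‖₂` times the square root of the volume of the unit ball. Off the ball, Cauchy–Schwarz
applied to `|f| = |t - t̄|^{-α} · |t - t̄|^α |f|` gives `r^{n/2-α} ‖|t - t̄|^α f‖₂` times the square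
root of `∫_{|y| > 1} |y|^{-2α}`, which is finite because `2α > n`; the powers of `r` come from
how Lebesgue measure scales under dilations. Choosing `r^α = ‖|t - t̄|^α f‖₂ / ‖f‖₂` makes both
terms equal to `‖f‖₂^{1-θ} ‖|t - t̄|^α f‖₂^θ`.
-/

open Module Metric Set

theorem norm_exp_neg_I_mul_ofReal (c : ℝ) : ‖Complex.exp (-(Complex.I * c))‖ = 1 := by
  rw [show -(Complex.I * c) = ((-c : ℝ) : ℂ) * Complex.I by push_cast; ring]
  exact Complex.norm_exp_ofReal_mul_I _

theorem enorm_ftr_le {N : ℕ} (f : RN N → ℂ) (ξ : RN N) : ‖ftr f ξ‖ₑ ≤ ∫⁻ x, ‖f x‖ₑ := by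
  refine (enorm_integral_le_lintegral_enorm _).trans_eq (lintegral_congr fun x => ?_)
  rw [enorm_mul, ← ofReal_norm (Complex.exp _), norm_exp_neg_I_mul_ofReal,
    ENNReal.ofReal_one, one_mul]

theorem setLIntegral_norm_ftr_sq_le {N : ℕ} (f : RN N → ℂ) (s : Set (RN N)) :
    ∫⁻ ξ in s, ENNReal.ofReal (‖ftr f ξ‖ ^ 2) ≤ volume s * (∫⁻ x, ‖f x‖ₑ) ^ 2 := by
  calc ∫⁻ ξ in s, ENNReal.ofReal (‖ftr f ξ‖ ^ 2)
      ≤ ∫⁻ _ in s, (∫⁻ x, ‖f x‖ₑ) ^ 2 := lintegral_mono fun ξ => by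
        rw [ENNReal.ofReal_pow (norm_nonneg _), ofReal_norm]
        gcongr
        exact enorm_ftr_le f ξ
    _ = volume s * (∫⁻ x, ‖f x‖ₑ) ^ 2 := by rw [setLIntegral_const, mul_comm]

theorem ENNReal.ofReal_rpow_mul_rpow {r : ℝ} (hr : 0 < r) (a : ℝ) (x : ℝ≥0∞) {p : ℝ}
    (hp : 0 ≤ p) : (ENNReal.ofReal (r ^ a) * x) ^ p = ENNReal.ofReal (r ^ (a * p)) * x ^ p := by
  rw [ENNReal.mul_rpow_of_nonneg _ _ hp, ENNReal.ofReal_rpow_of_nonneg (by positivity) hp,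
    ← Real.rpow_mul hr.le]

theorem exists_pos_rpow_mul_eq {A B : ℝ≥0∞} (hA₀ : A ≠ 0) (hA : A ≠ ∞) (hB₀ : B ≠ 0)
    (hB : B ≠ ∞) {α : ℝ} (hα : 0 < α) (p : ℝ) :
    ∃ r : ℝ, 0 < r ∧ ENNReal.ofReal (r ^ p) * A = A ^ (1 - p / α) * B ^ (p / α) ∧
      ENNReal.ofReal (r ^ (p - α)) * B = A ^ (1 - p / α) * B ^ (p / α) := by
  obtain ⟨a, ha, rfl⟩ : ∃ a : ℝ, 0 < a ∧ ENNReal.ofReal a = A :=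
    ⟨A.toReal, ENNReal.toReal_pos hA₀ hA, ENNReal.ofReal_toReal hA⟩
  obtain ⟨b, hb, rfl⟩ : ∃ b : ℝ, 0 < b ∧ ENNReal.ofReal b = B :=
    ⟨B.toReal, ENNReal.toReal_pos hB₀ hB, ENNReal.ofReal_toReal hB⟩
  set r := (b / a) ^ α⁻¹
  have hr : 0 < r := by positivity
  have hrα : r ^ α = b / a := Real.rpow_inv_rpow (by positivity) hα.ne'
  have hbal : r ^ p * a = a ^ (1 - p / α) * b ^ (p / α) := by
    rw [← Real.rpow_mul (by positivity), Real.div_rpow hb.le ha.le, Real.rpow_sub ha,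
      Real.rpow_one, inv_mul_eq_div]
    field_simp
  have hbal' : r ^ (p - α) * b = r ^ p * a := by
    rw [Real.rpow_sub hr, hrα]
    field_simp
  rw [ENNReal.ofReal_rpow_of_pos ha, ENNReal.ofReal_rpow_of_pos hb,
    ← ENNReal.ofReal_mul (by positivity)]
  refine ⟨r, hr, ?_, ?_⟩ <;> rw [← ENNReal.ofReal_mul (by positivity)]
  · rw [hbal]
  · rw [hbal', hbal]

theorem setLIntegral_enorm_le_measure_rpow_mul_eLpNorm {X F : Type*} [MeasurableSpace X]
    [NormedAddCommGroup F] (μ : Measure X) {f : X → F} (hf : AEStronglyMeasurable f μ)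
    (s : Set X) : ∫⁻ x in s, ‖f x‖ₑ ∂μ ≤ μ s ^ (1 / 2 : ℝ) * eLpNorm f 2 μ := by
  have h : ∫⁻ x in s, ‖f x‖ₑ ∂μ ≤ eLpNorm f 2 (μ.restrict s) * μ s ^ (1 / 2 : ℝ) := by
    have := eLpNorm_le_eLpNorm_mul_rpow_measure_univ (p := 1) (q := 2) (f := f) (by norm_num)
      (hf.restrict (s := s))
    rwa [eLpNorm_one_eq_lintegral_enorm, Measure.restrict_apply_univ,
      show 1 / (1 : ℝ≥0∞).toReal - 1 / (2 : ℝ≥0∞).toReal = 1 / 2 by norm_num] at this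
  rw [mul_comm]
  exact h.trans (by gcongr; exact Measure.restrict_le_self)

section WeightedNorm

variable {E F : Type*} [NormedAddCommGroup E] [MeasurableSpace E] [OpensMeasurableSpace E]
  [NormedAddCommGroup F] {μ : Measure E} {f : E → F}

theorem aestronglyMeasurable_weighted (hf : AEStronglyMeasurable f μ) (t₀ : E) (α : ℝ) :
    AEStronglyMeasurable (fun t => ‖t - t₀‖ ^ α * ‖f t‖) μ :=
  ((continuous_sub_right t₀).norm.measurable.pow_const α).aestronglyMeasurable.mul
    hf.norm

theorem setLIntegral_enorm_le_mul_eLpNorm_weighted (hf : AEStronglyMeasurable f μ)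
    {s : Set E} (hs : MeasurableSet s) {t₀ : E} (ht₀ : t₀ ∉ s) (α : ℝ) :
    ∫⁻ x in s, ‖f x‖ₑ ∂μ ≤ (∫⁻ x in s, ENNReal.ofReal (‖x - t₀‖ ^ (-(2 * α))) ∂μ) ^ (1 / 2 : ℝ) *
      eLpNorm (fun t => ‖t - t₀‖ ^ α * ‖f t‖) 2 μ := by
  have hsplit : ∀ x ∈ s, ‖f x‖ₑ =
      ENNReal.ofReal (‖x - t₀‖ ^ (-α)) * ‖‖x - t₀‖ ^ α * ‖f x‖‖ₑ := by
    intro x hx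
    have hx₀ : 0 < ‖x - t₀‖ := norm_pos_iff.2 (sub_ne_zero.2 (ne_of_mem_of_not_mem hx ht₀))
    rw [Real.enorm_eq_ofReal (by positivity), ← ENNReal.ofReal_mul (by positivity), ← mul_assoc,
      ← Real.rpow_add hx₀, neg_add_cancel, Real.rpow_zero, one_mul, ofReal_norm]
  rw [setLIntegral_congr_fun hs hsplit]
  refine (ENNReal.lintegral_mul_le_Lp_mul_Lq _ Real.HolderConjugate.two_two
    ((continuous_sub_right t₀).norm.measurable.pow_const _).ennreal_ofReal.aemeasurable
    (aestronglyMeasurable_weighted hf t₀ α).enorm.restrict).trans ?_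
  gcongr
  · rw [ENNReal.ofReal_rpow_of_nonneg (by positivity) (by norm_num),
      ← Real.rpow_mul (norm_nonneg _), neg_mul, mul_comm]
  · refine le_of_eq_of_le ?_ (eLpNorm_restrict_le _ 2 μ s)
    rw [eLpNorm_eq_lintegral_rpow_enorm_toReal two_ne_zero ENNReal.ofNat_ne_top,
      ENNReal.toReal_ofNat]

theorem eLpNorm_weighted_ne_zero [NullSingletonClass μ] (hf : AEStronglyMeasurable f μ)
    {p : ℝ≥0∞} (hp : p ≠ 0) (t₀ : E) (α : ℝ) (h : eLpNorm f p μ ≠ 0) :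
    eLpNorm (fun t => ‖t - t₀‖ ^ α * ‖f t‖) p μ ≠ 0 := by
  contrapose! h
  rw [eLpNorm_eq_zero_iff hf hp]
  filter_upwards [(eLpNorm_eq_zero_iff (aestronglyMeasurable_weighted hf t₀ α) hp).1 h,
    compl_mem_ae_iff.2 (measure_singleton t₀)] with x hx hxt
  have hd : 0 < ‖x - t₀‖ := norm_pos_iff.2 (sub_ne_zero.2 hxt)
  simpa [(Real.rpow_pos_of_pos hd α).ne'] using hx

end WeightedNorm

noncomputable def priceConst {E : Type*} [NormedAddCommGroup E] [MeasurableSpace E]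
    (μ : Measure E) (α : ℝ) : ℝ≥0∞ :=
  μ (ball 0 1) ^ (1 / 2 : ℝ) +
    (∫⁻ y in (closedBall (0 : E) 1)ᶜ, ENNReal.ofReal (‖y‖ ^ (-(2 * α))) ∂μ) ^ (1 / 2 : ℝ)

theorem priceConst_ne_zero {E : Type*} [NormedAddCommGroup E] [MeasurableSpace E]
    (μ : Measure E) [μ.IsOpenPosMeasure] (α : ℝ) : priceConst μ α ≠ 0 := by
  simp [priceConst, (measure_ball_pos μ (0 : E) one_pos).ne']

section AddHaar

variable {E F : Type*} [NormedAddCommGroup E] [NormedSpace ℝ E] [FiniteDimensional ℝ E]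
  [MeasurableSpace E] [BorelSpace E] [NormedAddCommGroup F] (μ : Measure E) [μ.IsAddHaarMeasure]

theorem lintegral_comp_smul_of_pos (g : E → ℝ≥0∞) {R : ℝ} (hR : 0 < R) :
    ∫⁻ x, g (R • x) ∂μ = ENNReal.ofReal (R ^ finrank ℝ E)⁻¹ * ∫⁻ x, g x ∂μ := by
  rw [← abs_of_pos (inv_pos.2 (pow_pos hR _)), ← smul_eq_mul, ← lintegral_smul_measure,
    ← Measure.map_addHaar_smul μ hR.ne']
  exact (lintegral_map_equiv g (MeasurableEquiv.smul₀ R hR.ne')).symm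

theorem setLIntegral_compl_closedBall_rpow_neg (s : ℝ) {r : ℝ} (hr : 0 < r) :
    ∫⁻ y in (closedBall (0 : E) r)ᶜ, ENNReal.ofReal (‖y‖ ^ (-s)) ∂μ =
      ENNReal.ofReal (r ^ ((finrank ℝ E : ℝ) - s)) *
        ∫⁻ y in (closedBall (0 : E) 1)ᶜ, ENNReal.ofReal (‖y‖ ^ (-s)) ∂μ := by
  set G : ℝ → E → ℝ≥0∞ := fun ρ => (closedBall 0 ρ)ᶜ.indicator fun y => ENNReal.ofReal (‖y‖ ^ (-s))
  have hG : ∀ x, G r (r • x) = ENNReal.ofReal (r ^ (-s)) * G 1 x := by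
    intro x
    simp only [G, indicator, mem_compl_iff, mem_closedBall_zero_iff, norm_smul,
      Real.norm_of_nonneg hr.le, mul_le_iff_le_one_right hr]
    split_ifs
    · simp
    · rw [Real.mul_rpow hr.le (norm_nonneg x), ENNReal.ofReal_mul (by positivity)]
  have hscale := lintegral_comp_smul_of_pos μ (G r) hr
  simp only [hG, lintegral_const_mul' _ _ ENNReal.ofReal_ne_top, G,
    lintegral_indicator measurableSet_closedBall.compl] at hscale
  calc ∫⁻ y in (closedBall (0 : E) r)ᶜ, ENNReal.ofReal (‖y‖ ^ (-s)) ∂μ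
      = ENNReal.ofReal (r ^ finrank ℝ E) * (ENNReal.ofReal (r ^ finrank ℝ E)⁻¹ *
          ∫⁻ y in (closedBall (0 : E) r)ᶜ, ENNReal.ofReal (‖y‖ ^ (-s)) ∂μ) := by
        rw [← mul_assoc, ← ENNReal.ofReal_mul (by positivity), mul_inv_cancel₀ (by positivity),
          ENNReal.ofReal_one, one_mul]
    _ = _ := by
        rw [← hscale, ← mul_assoc, ← ENNReal.ofReal_mul (by positivity), ← Real.rpow_natCast,
          ← Real.rpow_add hr, sub_eq_add_neg]

theorem setLIntegral_compl_closedBall_rpow_neg_sub (s : ℝ) (t₀ : E) {r : ℝ} (hr : 0 < r) :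
    ∫⁻ x in (closedBall t₀ r)ᶜ, ENNReal.ofReal (‖x - t₀‖ ^ (-s)) ∂μ =
      ENNReal.ofReal (r ^ ((finrank ℝ E : ℝ) - s)) *
        ∫⁻ y in (closedBall (0 : E) 1)ᶜ, ENNReal.ofReal (‖y‖ ^ (-s)) ∂μ := by
  have hpre : (· - t₀) ⁻¹' (closedBall (0 : E) r)ᶜ = (closedBall t₀ r)ᶜ := by
    ext x; simp [dist_eq_norm]
  rw [← hpre, (measurePreserving_sub_right μ t₀).setLIntegral_comp_preimage
    measurableSet_closedBall.compl (measurable_norm.pow_const _).ennreal_ofReal,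
    setLIntegral_compl_closedBall_rpow_neg μ s hr]

theorem setLIntegral_compl_closedBall_rpow_neg_lt_top {s : ℝ} (hs : (finrank ℝ E : ℝ) < s) :
    ∫⁻ y in (closedBall (0 : E) 1)ᶜ, ENNReal.ofReal (‖y‖ ^ (-s)) ∂μ < ∞ := by
  have hs₀ : 0 ≤ s := (Nat.cast_nonneg _).trans hs.le
  have hdecay : ∀ y ∈ (closedBall (0 : E) 1)ᶜ,
      ENNReal.ofReal (‖y‖ ^ (-s)) ≤ ENNReal.ofReal (2 ^ s) * ENNReal.ofReal ((1 + ‖y‖) ^ (-s)) := by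
    intro y hy
    have hy1 : 1 < ‖y‖ := by simpa using hy
    rw [← ENNReal.ofReal_mul (by positivity)]
    gcongr
    calc ‖y‖ ^ (-s) ≤ ((1 + ‖y‖) / 2) ^ (-s) :=
          Real.rpow_le_rpow_of_nonpos (by positivity) (by linarith) (by linarith)
      _ = 2 ^ s * (1 + ‖y‖) ^ (-s) := by
          rw [Real.div_rpow (by positivity) (by norm_num), Real.rpow_neg (by norm_num : (0:ℝ) ≤ 2),
            div_inv_eq_mul, mul_comm]
  calc ∫⁻ y in (closedBall (0 : E) 1)ᶜ, ENNReal.ofReal (‖y‖ ^ (-s)) ∂μ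
      ≤ ∫⁻ y, ENNReal.ofReal (2 ^ s) * ENNReal.ofReal ((1 + ‖y‖) ^ (-s)) ∂μ :=
        (setLIntegral_mono' measurableSet_closedBall.compl hdecay).trans
          (setLIntegral_le_lintegral _ _)
    _ < ∞ := by
        rw [lintegral_const_mul' _ _ ENNReal.ofReal_ne_top]
        exact ENNReal.mul_lt_top ENNReal.ofReal_lt_top (finite_integral_one_add_norm hs)

theorem priceConst_ne_top {α : ℝ} (hα : (finrank ℝ E : ℝ) / 2 < α) : priceConst μ α ≠ ∞ := by
  have hT := setLIntegral_compl_closedBall_rpow_neg_lt_top μ (s := 2 * α) (by linarith)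
  simp [priceConst, measure_ball_lt_top.ne, hT.ne]

theorem lintegral_enorm_le_of_radius {f : E → F} (hf : AEStronglyMeasurable f μ) (t₀ : E)
    (α : ℝ) {r : ℝ} (hr : 0 < r) :
    ∫⁻ x, ‖f x‖ₑ ∂μ ≤
      μ (ball 0 1) ^ (1 / 2 : ℝ) * (ENNReal.ofReal (r ^ ((finrank ℝ E : ℝ) / 2)) * eLpNorm f 2 μ) +
      (∫⁻ y in (closedBall (0 : E) 1)ᶜ, ENNReal.ofReal (‖y‖ ^ (-(2 * α))) ∂μ) ^ (1 / 2 : ℝ) *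
        (ENNReal.ofReal (r ^ ((finrank ℝ E : ℝ) / 2 - α)) *
          eLpNorm (fun t => ‖t - t₀‖ ^ α * ‖f t‖) 2 μ) := by
  rw [← lintegral_add_compl _ (measurableSet_closedBall (x := t₀) (ε := r))]
  gcongr
  · refine (setLIntegral_enorm_le_measure_rpow_mul_eLpNorm μ hf _).trans_eq ?_
    rw [Measure.addHaar_closedBall μ t₀ hr.le, ← Real.rpow_natCast,
      ENNReal.ofReal_rpow_mul_rpow hr _ _ (by norm_num), mul_assoc]
    ring_nf
  · refine (setLIntegral_enorm_le_mul_eLpNorm_weighted hf measurableSet_closedBall.compl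
      (fun h => h (mem_closedBall_self hr.le)) α).trans_eq ?_
    rw [setLIntegral_compl_closedBall_rpow_neg_sub μ _ t₀ hr,
      ENNReal.ofReal_rpow_mul_rpow hr _ _ (by norm_num), mul_assoc]
    ring_nf

theorem lintegral_enorm_le_priceConst_mul [Nontrivial E] {α : ℝ}
    (hα : (finrank ℝ E : ℝ) / 2 < α) {f : E → F} (hf : AEStronglyMeasurable f μ) (t₀ : E) :
    ∫⁻ x, ‖f x‖ₑ ∂μ ≤ priceConst μ α * eLpNorm f 2 μ ^ (1 - (finrank ℝ E : ℝ) / (2 * α)) *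
      eLpNorm (fun t => ‖t - t₀‖ ^ α * ‖f t‖) 2 μ ^ ((finrank ℝ E : ℝ) / (2 * α)) := by
  have hsplit := fun r (hr : 0 < r) => lintegral_enorm_le_of_radius μ hf t₀ α hr
  set A := eLpNorm f 2 μ
  set B := eLpNorm (fun t => ‖t - t₀‖ ^ α * ‖f t‖) 2 μ
  have hn : (0 : ℝ) < finrank ℝ E := Nat.cast_pos.2 finrank_pos
  have hα₀ : 0 < α := by linarith
  have hθ₀ : 0 < (finrank ℝ E : ℝ) / (2 * α) := by positivity
  have hθ₁ : 0 < 1 - (finrank ℝ E : ℝ) / (2 * α) := by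
    rw [sub_pos, div_lt_one (by positivity)]; linarith
  obtain hA₀ | hA₀ := eq_or_ne A 0
  · have hf₀ : f =ᵐ[μ] 0 := (eLpNorm_eq_zero_iff hf two_ne_zero).1 hA₀
    rw [lintegral_congr_ae (g := fun _ => 0) (hf₀.mono fun x hx => by simp [hx]), lintegral_zero]
    exact zero_le
  have hB₀ : B ≠ 0 := eLpNorm_weighted_ne_zero hf two_ne_zero t₀ α hA₀
  have hC₀ := priceConst_ne_zero μ α
  by_cases hA : A = ∞
  · simp [hA, ENNReal.top_rpow_of_pos hθ₁, ENNReal.mul_top hC₀, hB₀, hθ₀.le]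
  by_cases hB : B = ∞
  · simp [hB, ENNReal.top_rpow_of_pos hθ₀, ENNReal.mul_top, hC₀, hA₀, hA, hθ₁]
  obtain ⟨r, hr, hball, htail⟩ :=
    exists_pos_rpow_mul_eq hA₀ hA hB₀ hB hα₀ ((finrank ℝ E : ℝ) / 2)
  rw [div_div] at hball htail
  refine (hsplit r hr).trans_eq ?_
  rw [hball, htail, ← add_mul, mul_assoc, priceConst]

end AddHaar

theorem stmt16 {N : ℕ} (hN : 0 < N) (α : ℝ) (hα : (N : ℝ) / 2 < α) :
    ∃ K' : ℝ, 0 < K' ∧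
      ∀ (E : Set (RN N)), MeasurableSet E →
      ∀ f : RN N → ℂ, MeasureTheory.MemLp f 2 MeasureTheory.volume → f ≠ 0 →
      ∀ t0 : RN N,
        (∫⁻ ξ in E, ENNReal.ofReal (‖ftr f ξ‖ ^ 2)) ≤
          ENNReal.ofReal K' * MeasureTheory.volume E *
          (MeasureTheory.eLpNorm f 2 MeasureTheory.volume) ^ (2 - (N : ℝ) / α) *
          (MeasureTheory.eLpNorm (fun t : RN N => ‖t - t0‖ ^ α * ‖f t‖) 2
            MeasureTheory.volume) ^ ((N : ℝ) / α) := by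
  have : Nonempty (Fin N) := ⟨⟨0, hN⟩⟩
  have hα' : (finrank ℝ (RN N) : ℝ) / 2 < α := by simpa using hα
  set C := priceConst (volume : Measure (RN N)) α
  have hC : C ≠ ∞ := priceConst_ne_top _ hα'
  refine ⟨C.toReal ^ 2, pow_pos (ENNReal.toReal_pos (priceConst_ne_zero _ α) hC) 2, ?_⟩
  intro E _ f hf _ t0
  have hprice := lintegral_enorm_le_priceConst_mul volume hα' hf.1 t0
  rw [finrank_fin_fun] at hprice
  have hα₀ : α ≠ 0 := ((by positivity : (0 : ℝ) ≤ N / 2).trans_lt hα).ne'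
  calc (∫⁻ ξ in E, ENNReal.ofReal (‖ftr f ξ‖ ^ 2))
      ≤ volume E * (∫⁻ x, ‖f x‖ₑ) ^ 2 := setLIntegral_norm_ftr_sq_le f E
    _ ≤ volume E * (C * eLpNorm f 2 volume ^ (1 - (N : ℝ) / (2 * α)) *
          eLpNorm (fun t => ‖t - t0‖ ^ α * ‖f t‖) 2 volume ^ ((N : ℝ) / (2 * α))) ^ 2 := by
        gcongr
    _ = _ := by
        rw [show 2 - (N : ℝ) / α = (1 - N / (2 * α)) * 2 by field_simp,
          show (N : ℝ) / α = N / (2 * α) * 2 by field_simp, ENNReal.rpow_mul, ENNReal.rpow_mul,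
          ENNReal.rpow_two, ENNReal.rpow_two, ENNReal.ofReal_pow ENNReal.toReal_nonneg,
          ENNReal.ofReal_toReal hC]
        ring
end
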